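/- With the Gaeta–Diesel setup below, if i ∈ C (i.e. 4 ≤ i ≤ n+2 and θ ≤ d_i + d_{2n+5−i}), i ∉ B̄ and i−1 ∉ B̄, then ν_{d_i} = e(d_i) − 1; in other words, the number of indices j with d_j = d_i equals −Δ²H(d_i) − 1. (Part b) of Proposition 1.7 of the paper.) -/

import Mathlib

/-!
Write `c = d i`. Since `i ∈ C` but `i, i - 1 ∉ B̄`, the value `θ - c` lies in
`(d (2n+4-i), d (2n+5-i)]` and `d (i-1) < c`. By monotonicity exactly `i - 1` of the
degrees are `< c` and exactly `i - 3` satisfy `θ - d j ≤ c`, so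
`e(c) = (ν_c + (i - 1)) - (i - 3) - 1 = ν_c + 1`.
-/

open Finset

theorem card_filter_le_eq_card_filter_eq_add_card_filter_lt {ι α : Type*} [LinearOrder α]
    (s : Finset ι) (f : ι → α) (c : α) :
    #(s.filter (fun j => f j ≤ c)) =
      #(s.filter (fun j => f j = c)) + #(s.filter (fun j => f j < c)) := by
  classical
  rw [filter_congr fun _ _ => le_iff_eq_or_lt, filter_or]
  exact card_union_of_disjoint (disjoint_filter.2 fun _ _ h => h.not_lt)

section MonotoneOn

variable {α : Type*} [LinearOrder α] {d : ℕ → α} {m k : ℕ} {c : α}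

theorem filter_lt_eq_Icc_of_monotoneOn (hd : MonotoneOn d (Set.Icc 1 m)) (hk : 1 ≤ k)
    (hkm : k < m) (hlt : d k < c) (hle : c ≤ d (k + 1)) :
    (Icc 1 m).filter (fun j => d j < c) = Icc 1 k := by
  ext j
  simp only [mem_filter, mem_Icc]
  constructor
  · rintro ⟨⟨hj1, hjm⟩, hjc⟩
    refine ⟨hj1, not_lt.1 fun hkj => ?_⟩
    exact (hle.trans (hd ⟨by omega, by omega⟩ ⟨hj1, hjm⟩ hkj)).not_gt hjc
  · rintro ⟨hj1, hjk⟩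
    exact ⟨⟨hj1, by omega⟩, (hd ⟨hj1, by omega⟩ ⟨hk, hkm.le⟩ hjk).trans_lt hlt⟩

theorem card_filter_lt_of_monotoneOn (hd : MonotoneOn d (Set.Icc 1 m)) (hk : 1 ≤ k)
    (hkm : k < m) (hlt : d k < c) (hle : c ≤ d (k + 1)) :
    #((Icc 1 m).filter (fun j => d j < c)) = k := by
  rw [filter_lt_eq_Icc_of_monotoneOn hd hk hkm hlt hle, Nat.card_Icc, Nat.add_sub_cancel]

theorem card_filter_ge_of_monotoneOn (hd : MonotoneOn d (Set.Icc 1 m)) (hk : 1 ≤ k)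
    (hkm : k < m) (hlt : d k < c) (hle : c ≤ d (k + 1)) :
    #((Icc 1 m).filter (fun j => c ≤ d j)) = m - k := by
  have hsplit := card_filter_add_card_filter_not (s := Icc 1 m) (fun j => d j < c)
  simp only [not_lt] at hsplit
  rw [card_filter_lt_of_monotoneOn hd hk hkm hlt hle, Nat.card_Icc] at hsplit
  omega

end MonotoneOn

theorem stmt_2_general (n : ℕ) (d : ℕ → ℤ) (θ : ℤ)
    (hmono : ∀ j k, 1 ≤ j → j ≤ k → k ≤ 2 * n + 1 → d j ≤ d k)
    (i : ℕ) (hi4 : 4 ≤ i) (hi : i ≤ n + 2)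
    (hiC : θ ≤ d i + d (2 * n + 5 - i))
    (hiB : ¬ (3 ≤ i ∧ i ≤ 2 * n + 1 ∧ θ ≤ d i + d (2 * n + 4 - i)))
    (hiB' : ¬ (3 ≤ i - 1 ∧ i - 1 ≤ 2 * n + 1 ∧ θ ≤ d (i - 1) + d (2 * n + 4 - (i - 1)))) :
    (((Finset.Icc 1 (2 * n + 1)).filter (fun j => d j = d i)).card : ℤ) =
      ((((Finset.Icc 1 (2 * n + 1)).filter (fun j => d j ≤ d i)).card : ℤ) -
        (((Finset.Icc 1 (2 * n + 1)).filter (fun j => θ - d j ≤ d i)).card : ℤ) - 1) - 1 := by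
  have hd : MonotoneOn d (Set.Icc 1 (2 * n + 1)) := fun j hj k hk hjk => hmono j k hj.1 hjk hk.2
  have hθ_lt : d (2 * n + 4 - i) < θ - d i := by
    linarith [not_le.1 fun h => hiB ⟨by omega, by omega, h⟩]
  have hθ_le : θ - d i ≤ d (2 * n + 4 - i + 1) := by
    rw [show 2 * n + 4 - i + 1 = 2 * n + 5 - i by omega]; linarith
  have hgap : d (i - 1) < d i := by
    have h := hiB'
    rw [show 2 * n + 4 - (i - 1) = 2 * n + 5 - i by omega] at h
    linarith [not_le.1 fun h' => h ⟨by omega, by omega, h'⟩]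
  have hlt : #((Icc 1 (2 * n + 1)).filter (fun j => d j < d i)) = i - 1 :=
    card_filter_lt_of_monotoneOn hd (by omega) (by omega) hgap
      (by rw [Nat.sub_add_cancel (by omega)])
  have hge : #((Icc 1 (2 * n + 1)).filter (fun j => θ - d j ≤ d i)) = i - 3 := by
    rw [filter_congr fun j _ => sub_le_comm,
      card_filter_ge_of_monotoneOn hd (by omega) (by omega) hθ_lt hθ_le]
    omega
  have hle := card_filter_le_eq_card_filter_eq_add_card_filter_lt (Icc 1 (2 * n + 1)) d (d i)
  omega

/-- Proposition 1.7 b): with the Gaeta–Diesel setup, if `i ∈ C`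
(i.e. `4 ≤ i ≤ n+2` and `θ ≤ d i + d (2n+5-i)`), `i ∉ B̄` and `i-1 ∉ B̄`,
then the number of indices `j` with `d j = d i` equals `e(d i) - 1`. -/
theorem stmt_2 (n : ℕ) (hn : 1 ≤ n) (d : ℕ → ℤ) (θ : ℤ)
    (hpos : ∀ j, 1 ≤ j → j ≤ 2 * n + 1 → 0 < d j)
    (hθpos : 0 < θ)
    (hmono : ∀ j k, 1 ≤ j → j ≤ k → k ≤ 2 * n + 1 → d j ≤ d k)
    (hsum : (n : ℤ) * θ = ∑ j ∈ Finset.Icc 1 (2 * n + 1), d j)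
    (hGD : ∀ i, 1 ≤ i → i ≤ n → d (i + 1) + d (2 * n + 2 - i) < θ)
    (i : ℕ) (hi4 : 4 ≤ i) (hi : i ≤ n + 2)
    (hiC : θ ≤ d i + d (2 * n + 5 - i))
    (hiB : ¬ (3 ≤ i ∧ i ≤ 2 * n + 1 ∧ θ ≤ d i + d (2 * n + 4 - i)))
    (hiB' : ¬ (3 ≤ i - 1 ∧ i - 1 ≤ 2 * n + 1 ∧ θ ≤ d (i - 1) + d (2 * n + 4 - (i - 1)))) :
    (((Finset.Icc 1 (2 * n + 1)).filter (fun j => d j = d i)).card : ℤ) =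
      ((((Finset.Icc 1 (2 * n + 1)).filter (fun j => d j ≤ d i)).card : ℤ) -
        (((Finset.Icc 1 (2 * n + 1)).filter (fun j => θ - d j ≤ d i)).card : ℤ) - 1) - 1 :=
  stmt_2_general n d θ hmono i hi4 hi hiC hiB hiB'
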